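/- Let N ≥ 3 and let u₁ : ℝ^N → ℂ be measurable with ∫_{ℝ^N}|u₁(x)|² dx < ∞ and ‖u₁‖_{1,1} := ∫_{ℝ^N} (1 + |x|)|u₁(x)| dx < ∞. Set ŵ₁(ξ) = ∫_{ℝ^N} u₁(x) e^{-i⟨x,ξ⟩} dx, P₁ = ∫_{ℝ^N} u₁(x) dx, û(ξ,t) = (4/π) e^{-t log(1+|ξ|²)/2} sin(πt/4) ŵ₁(ξ), and F₃(ξ,t) = (4/π) P₁ e^{-t log(1+|ξ|²)/2} sin( t √(log(1 + |ξ|²)) ). Then there exist constants C₁ > 0 and C₂ > 0 depending only on N, and T > 0, such that for all t ≥ T: ∫_{|ξ| < 1} |û(ξ,t) - F₃(ξ,t)|² dξ ≤ C₁ ‖u₁‖_{1,1}² t^{-(N+2)/2} + C₂ |P₁|² t^{-(N-2)/2}. -/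

import Mathlib

open MeasureTheory

/-- Non-normalized Fourier transform `ŵ(ξ) = ∫ u(x) e^{-i⟨x,ξ⟩} dx`. -/
noncomputable def ft {N : ℕ} (u : EuclideanSpace ℝ (Fin N) → ℂ)
    (ξ : EuclideanSpace ℝ (Fin N)) : ℂ :=
  ∫ x, u x * Complex.exp (-Complex.I * ((inner ℝ x ξ : ℝ) : ℂ))

/-- The explicit Fourier-space solution with zero initial position and
initial velocity `w₁ ξ`. -/
noncomputable def uhat0 {N : ℕ} (w₁ : EuclideanSpace ℝ (Fin N) → ℂ)
    (ξ : EuclideanSpace ℝ (Fin N)) (t : ℝ) : ℂ :=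
  ((4 / Real.pi : ℝ) : ℂ) * (Real.exp (-(t * Real.log (1 + ‖ξ‖ ^ 2)) / 2) : ℂ)
    * (Real.sin (Real.pi * t / 4) : ℂ) * w₁ ξ

/-- The leading profile `F₃`. -/
noncomputable def F₃ {N : ℕ} (P₁ : ℂ) (ξ : EuclideanSpace ℝ (Fin N)) (t : ℝ) : ℂ :=
  ((4 / Real.pi : ℝ) : ℂ) * P₁ * (Real.exp (-(t * Real.log (1 + ‖ξ‖ ^ 2)) / 2) : ℂ)
    * (Real.sin (t * Real.sqrt (Real.log (1 + ‖ξ‖ ^ 2))) : ℂ)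

/-!
On the unit ball `log (1 + |ξ|²) ≥ |ξ|² / 2`, so the common factor `e^{-t log(1+|ξ|²)/2}` of `û`
and `F₃` is dominated by the Gaussian `e^{-t|ξ|²/4}`. Writing
`û - F₃ = (4/π) e^{…} (sin(πt/4) (ŵ₁(ξ) - P₁) + (sin(πt/4) - sin(t √log(1+|ξ|²))) P₁)`,
the first term is at most `‖u₁‖_{1,1} |ξ|` because `ŵ₁` is Lipschitz at `0` with that constant,
and `|ξ|² e^{-t|ξ|²/2} ≤ (4/t) e^{-t|ξ|²/4}` gains a factor `t⁻¹`; the second term is at most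
`2 |P₁|`. Integrating the Gaussian gives `(4π/t)^{N/2}`, and `t^{-N/2} ≤ t^{-(N-2)/2}` for `t ≥ 1`.
-/

open Real Complex

lemma norm_ft_sub_integral_le {N : ℕ} {u : EuclideanSpace ℝ (Fin N) → ℂ}
    (hu : AEStronglyMeasurable u volume) (hint : Integrable fun x => (1 + ‖x‖) * ‖u x‖)
    (ξ : EuclideanSpace ℝ (Fin N)) :
    ‖ft u ξ - ∫ x, u x‖ ≤ (∫ x, (1 + ‖x‖) * ‖u x‖) * ‖ξ‖ := by
  have hu_int : Integrable u :=
    hint.mono' hu (.of_forall fun x => by nlinarith [norm_nonneg (u x), norm_nonneg x])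
  have hphase : Continuous fun x : EuclideanSpace ℝ (Fin N) =>
      cexp (-I * ((inner ℝ x ξ : ℝ) : ℂ)) := by fun_prop
  have hu_phase : Integrable fun x => u x * cexp (-I * ((inner ℝ x ξ : ℝ) : ℂ)) :=
    hu_int.norm.mono' (hu.mul hphase.aestronglyMeasurable) (.of_forall fun x => by
      simp [Complex.norm_exp])
  rw [ft, ← integral_sub hu_phase hu_int, ← integral_mul_const]
  refine norm_integral_le_of_norm_le (hint.mul_const _) (.of_forall fun x => ?_)
  have hphase_sub : ‖cexp (-I * ((inner ℝ x ξ : ℝ) : ℂ)) - 1‖ ≤ ‖x‖ * ‖ξ‖ := by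
    rw [show -I * ((inner ℝ x ξ : ℝ) : ℂ) = I * ((-inner ℝ x ξ : ℝ) : ℂ) by push_cast; ring]
    exact Real.norm_exp_I_mul_ofReal_sub_one_le.trans
      ((norm_neg _).trans_le (abs_real_inner_le_norm x ξ))
  calc ‖u x * cexp (-I * ((inner ℝ x ξ : ℝ) : ℂ)) - u x‖
      = ‖u x‖ * ‖cexp (-I * ((inner ℝ x ξ : ℝ) : ℂ)) - 1‖ := by rw [← norm_mul, mul_sub_one]
    _ ≤ ‖u x‖ * (‖x‖ * ‖ξ‖) := by gcongr
    _ ≤ (1 + ‖x‖) * ‖u x‖ * ‖ξ‖ := by nlinarith [norm_nonneg (u x), norm_nonneg ξ]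

lemma half_le_log_one_add {x : ℝ} (hx0 : 0 ≤ x) (hx2 : x ≤ 2) : x / 2 ≤ Real.log (1 + x) :=
  le_trans (by rw [div_le_div_iff₀ (by norm_num) (by linarith)]; nlinarith)
    (Real.le_log_one_add_of_nonneg hx0)

lemma sq_mul_exp_neg_half_le {t : ℝ} (ht : 0 < t) (r : ℝ) :
    r ^ 2 * Real.exp (-(t * r ^ 2 / 2)) ≤ 4 / t * Real.exp (-(t / 4) * r ^ 2) := by
  have hs : t * r ^ 2 / 4 * Real.exp (-(t * r ^ 2 / 4)) ≤ 1 := by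
    rw [Real.exp_neg, ← div_eq_mul_inv, div_le_one (Real.exp_pos _)]
    linarith [Real.add_one_le_exp (t * r ^ 2 / 4)]
  calc r ^ 2 * Real.exp (-(t * r ^ 2 / 2))
      = 4 / t * (t * r ^ 2 / 4 * Real.exp (-(t * r ^ 2 / 4))) * Real.exp (-(t / 4) * r ^ 2) := by
        rw [show -(t * r ^ 2 / 2) = -(t * r ^ 2 / 4) + -(t / 4) * r ^ 2 by ring, Real.exp_add]
        field_simp
    _ ≤ 4 / t * Real.exp (-(t / 4) * r ^ 2) :=
        mul_le_mul_of_nonneg_right (mul_le_of_le_one_right (by positivity) hs) (Real.exp_pos _).le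

section Gaussian

variable {V : Type*} [NormedAddCommGroup V] [InnerProductSpace ℝ V] [FiniteDimensional ℝ V]
  [MeasurableSpace V] [BorelSpace V] {b : ℝ}

lemma integrable_rexp_neg_mul_sq_norm (hb : 0 < b) :
    Integrable fun v : V => Real.exp (-b * ‖v‖ ^ 2) :=
  .of_integral_ne_zero (by rw [GaussianFourier.integral_rexp_neg_mul_sq_norm hb]; positivity)

lemma setIntegral_rexp_neg_mul_sq_norm_le (s : Set V) (hb : 0 < b) :
    ∫ v in s, Real.exp (-b * ‖v‖ ^ 2) ≤ (π / b) ^ (Module.finrank ℝ V / 2 : ℝ) := by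
  rw [← GaussianFourier.integral_rexp_neg_mul_sq_norm hb]
  exact setIntegral_le_integral (integrable_rexp_neg_mul_sq_norm hb)
    (.of_forall fun v => (Real.exp_pos _).le)

end Gaussian

lemma norm_uhat0_sub_F₃_le {N : ℕ} (w : EuclideanSpace ℝ (Fin N) → ℂ) (P : ℂ)
    (ξ : EuclideanSpace ℝ (Fin N)) (t : ℝ) :
    ‖uhat0 w ξ t - F₃ P ξ t‖
      ≤ 4 / π * Real.exp (-(t * Real.log (1 + ‖ξ‖ ^ 2)) / 2) * (‖w ξ - P‖ + 2 * ‖P‖) := by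
  set E := Real.exp (-(t * Real.log (1 + ‖ξ‖ ^ 2)) / 2)
  set s₁ := Real.sin (π * t / 4)
  set s₂ := Real.sin (t * √(Real.log (1 + ‖ξ‖ ^ 2)))
  have hsplit : uhat0 w ξ t - F₃ P ξ t
      = ((4 / π * E : ℝ) : ℂ) * ((s₁ : ℂ) * (w ξ - P) + ((s₁ - s₂ : ℝ) : ℂ) * P) := by
    simp only [uhat0, F₃, E, s₁, s₂]
    push_cast
    ring
  have hs₁ : ‖(s₁ : ℂ)‖ ≤ 1 := by simpa using Real.abs_sin_le_one _
  have hs₁₂ : ‖((s₁ - s₂ : ℝ) : ℂ)‖ ≤ 2 := by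
    rw [Complex.norm_real, Real.norm_eq_abs]
    linarith [abs_sub s₁ s₂, Real.abs_sin_le_one (π * t / 4),
      Real.abs_sin_le_one (t * √(Real.log (1 + ‖ξ‖ ^ 2)))]
  rw [hsplit, norm_mul, Complex.norm_real, Real.norm_of_nonneg (by positivity)]
  gcongr
  refine (norm_add_le _ _).trans ?_
  rw [norm_mul, norm_mul]
  gcongr
  exact mul_le_of_le_one_left (norm_nonneg _) hs₁

lemma sq_norm_uhat0_sub_F₃_le {N : ℕ} {w : EuclideanSpace ℝ (Fin N) → ℂ} {P : ℂ}
    {ξ : EuclideanSpace ℝ (Fin N)} {M t : ℝ} (ht : 0 < t) (hξ : ‖ξ‖ ≤ 1)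
    (hw : ‖w ξ - P‖ ≤ M * ‖ξ‖) :
    ‖uhat0 w ξ t - F₃ P ξ t‖ ^ 2
      ≤ 128 / π ^ 2 * (M ^ 2 / t + ‖P‖ ^ 2) * Real.exp (-(t / 4) * ‖ξ‖ ^ 2) := by
  set r := ‖ξ‖
  have hr : 0 ≤ r := norm_nonneg ξ
  have hlog : r ^ 2 / 2 ≤ Real.log (1 + r ^ 2) := half_le_log_one_add (by positivity) (by nlinarith)
  have hE : Real.exp (-(t * Real.log (1 + r ^ 2)) / 2) ^ 2 ≤ Real.exp (-(t * r ^ 2 / 2)) := by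
    rw [← Real.exp_nat_mul, Real.exp_le_exp]
    nlinarith
  have hw_sq : ‖w ξ - P‖ ^ 2 ≤ M ^ 2 * r ^ 2 := by
    rw [← mul_pow]; exact pow_le_pow_left₀ (norm_nonneg _) hw 2
  have hdecay := sq_mul_exp_neg_half_le ht r
  have hgauss : Real.exp (-(t * r ^ 2 / 2)) ≤ Real.exp (-(t / 4) * r ^ 2) :=
    Real.exp_le_exp.2 (by nlinarith [mul_nonneg ht.le (sq_nonneg r)])
  calc ‖uhat0 w ξ t - F₃ P ξ t‖ ^ 2
      ≤ (4 / π * Real.exp (-(t * Real.log (1 + r ^ 2)) / 2) * (‖w ξ - P‖ + 2 * ‖P‖)) ^ 2 := by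
        gcongr; exact norm_uhat0_sub_F₃_le w P ξ t
    _ ≤ 16 / π ^ 2 * Real.exp (-(t * r ^ 2 / 2)) * (2 * ‖w ξ - P‖ ^ 2 + 8 * ‖P‖ ^ 2) := by
        rw [mul_pow, mul_pow, div_pow]
        gcongr
        · norm_num
        · nlinarith [sq_nonneg (‖w ξ - P‖ - 2 * ‖P‖)]
    _ ≤ 16 / π ^ 2 * Real.exp (-(t * r ^ 2 / 2)) * (2 * (M ^ 2 * r ^ 2) + 8 * ‖P‖ ^ 2) := by
        gcongr
    _ = 32 / π ^ 2 * M ^ 2 * (r ^ 2 * Real.exp (-(t * r ^ 2 / 2)))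
          + 128 / π ^ 2 * ‖P‖ ^ 2 * Real.exp (-(t * r ^ 2 / 2)) := by ring
    _ ≤ 32 / π ^ 2 * M ^ 2 * (4 / t * Real.exp (-(t / 4) * r ^ 2))
          + 128 / π ^ 2 * ‖P‖ ^ 2 * Real.exp (-(t / 4) * r ^ 2) := by gcongr
    _ = 128 / π ^ 2 * (M ^ 2 / t + ‖P‖ ^ 2) * Real.exp (-(t / 4) * r ^ 2) := by ring

lemma mul_pi_div_rpow_le {d a b t : ℝ} (hb : 0 ≤ b) (ht : 1 ≤ t) :
    (a / t + b) * (π / (t / 4)) ^ (d / 2)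
      ≤ (4 * π) ^ (d / 2) * a * t ^ (-(d + 2) / 2) + (4 * π) ^ (d / 2) * b * t ^ (-(d - 2) / 2) := by
  have ht0 : 0 < t := one_pos.trans_le ht
  have hsplit : (π / (t / 4)) ^ (d / 2) = (4 * π) ^ (d / 2) * t ^ (-d / 2) := by
    rw [show π / (t / 4) = 4 * π * t⁻¹ by field_simp, Real.mul_rpow (by positivity) (by positivity),
      Real.inv_rpow ht0.le, ← Real.rpow_neg ht0.le, neg_div]
  have hinv : t⁻¹ * t ^ (-d / 2) = t ^ (-(d + 2) / 2) := by
    rw [← Real.rpow_neg_one, ← Real.rpow_add ht0]; ring_nf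
  have hmono : t ^ (-d / 2) ≤ t ^ (-(d - 2) / 2) :=
    Real.rpow_le_rpow_of_exponent_le ht (by linarith)
  calc (a / t + b) * (π / (t / 4)) ^ (d / 2)
      = (4 * π) ^ (d / 2) * a * (t⁻¹ * t ^ (-d / 2)) + (4 * π) ^ (d / 2) * b * t ^ (-d / 2) := by
        rw [hsplit]; ring
    _ ≤ _ := by rw [hinv]; gcongr

theorem stmt_15_general (N : ℕ)
    (u₁ : EuclideanSpace ℝ (Fin N) → ℂ)
    (hmeas : AEStronglyMeasurable u₁ volume)
    (hint : Integrable (fun x : EuclideanSpace ℝ (Fin N) => (1 + ‖x‖) * ‖u₁ x‖)) :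
    ∃ C₁ > (0 : ℝ), ∃ C₂ > (0 : ℝ), ∃ T > (0 : ℝ), ∀ t : ℝ, T ≤ t →
      (∫ ξ in Metric.ball (0 : EuclideanSpace ℝ (Fin N)) 1,
        ‖uhat0 (ft u₁) ξ t - F₃ (∫ x, u₁ x) ξ t‖ ^ 2)
      ≤ C₁ * (∫ x : EuclideanSpace ℝ (Fin N), (1 + ‖x‖) * ‖u₁ x‖) ^ 2
            * t ^ (-((N : ℝ) + 2) / 2)
        + C₂ * ‖∫ x, u₁ x‖ ^ 2 * t ^ (-((N : ℝ) - 2) / 2) := by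
  set M := ∫ x : EuclideanSpace ℝ (Fin N), (1 + ‖x‖) * ‖u₁ x‖
  set P₁ := ∫ x, u₁ x
  set B := Metric.ball (0 : EuclideanSpace ℝ (Fin N)) 1
  set C := 128 / π ^ 2 * (4 * π) ^ ((N : ℝ) / 2)
  refine ⟨C, by positivity, C, by positivity, 1, one_pos, fun t ht => ?_⟩
  have ht0 : 0 < t := one_pos.trans_le ht
  have hpointwise : ∀ ξ ∈ B, ‖uhat0 (ft u₁) ξ t - F₃ P₁ ξ t‖ ^ 2
      ≤ 128 / π ^ 2 * (M ^ 2 / t + ‖P₁‖ ^ 2) * Real.exp (-(t / 4) * ‖ξ‖ ^ 2) := fun ξ hξ =>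
    sq_norm_uhat0_sub_F₃_le ht0 (mem_ball_zero_iff.1 hξ).le (norm_ft_sub_integral_le hmeas hint ξ)
  calc (∫ ξ in B, ‖uhat0 (ft u₁) ξ t - F₃ P₁ ξ t‖ ^ 2)
      ≤ ∫ ξ in B, 128 / π ^ 2 * (M ^ 2 / t + ‖P₁‖ ^ 2) * Real.exp (-(t / 4) * ‖ξ‖ ^ 2) :=
        integral_mono_of_nonneg (.of_forall fun ξ => by positivity)
          ((integrable_rexp_neg_mul_sq_norm (by positivity)).const_mul _).restrict
          ((ae_restrict_iff' measurableSet_ball).2 (.of_forall hpointwise))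
    _ ≤ 128 / π ^ 2 * ((M ^ 2 / t + ‖P₁‖ ^ 2) * (π / (t / 4)) ^ ((N : ℝ) / 2)) := by
        rw [integral_const_mul, mul_assoc]
        gcongr
        simpa using setIntegral_rexp_neg_mul_sq_norm_le B (show 0 < t / 4 by positivity)
    _ ≤ 128 / π ^ 2 * ((4 * π) ^ ((N : ℝ) / 2) * M ^ 2 * t ^ (-((N : ℝ) + 2) / 2)
          + (4 * π) ^ ((N : ℝ) / 2) * ‖P₁‖ ^ 2 * t ^ (-((N : ℝ) - 2) / 2)) := by
        gcongr; exact mul_pi_div_rpow_le (sq_nonneg _) ht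
    _ = C * M ^ 2 * t ^ (-((N : ℝ) + 2) / 2) + C * ‖P₁‖ ^ 2 * t ^ (-((N : ℝ) - 2) / 2) := by
        ring

/-- Theorem 3.3: low-frequency asymptotic profile estimate. -/
theorem stmt_15 (N : ℕ) (hN : 3 ≤ N)
    (u₁ : EuclideanSpace ℝ (Fin N) → ℂ)
    (hmeas : AEStronglyMeasurable u₁ volume)
    (hL2 : Integrable (fun x : EuclideanSpace ℝ (Fin N) => ‖u₁ x‖ ^ 2))
    (hint : Integrable (fun x : EuclideanSpace ℝ (Fin N) => (1 + ‖x‖) * ‖u₁ x‖)) :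
    ∃ C₁ > (0 : ℝ), ∃ C₂ > (0 : ℝ), ∃ T > (0 : ℝ), ∀ t : ℝ, T ≤ t →
      (∫ ξ in Metric.ball (0 : EuclideanSpace ℝ (Fin N)) 1,
        ‖uhat0 (ft u₁) ξ t - F₃ (∫ x, u₁ x) ξ t‖ ^ 2)
      ≤ C₁ * (∫ x : EuclideanSpace ℝ (Fin N), (1 + ‖x‖) * ‖u₁ x‖) ^ 2
            * t ^ (-((N : ℝ) + 2) / 2)
        + C₂ * ‖∫ x, u₁ x‖ ^ 2 * t ^ (-((N : ℝ) - 2) / 2) :=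
  stmt_15_general N u₁ hmeas hint
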